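/- The root lattice A₂ embeds primitively into the root lattice E₈ with orthogonal complement isometric to E₆. -/

import Mathlib

open Matrix

/-- The bilinear form attached to a Gram matrix `G`. -/
def BF {ι : Type*} [Fintype ι] (G : Matrix ι ι ℤ) (x y : ι → ℤ) : ℤ :=
  x ⬝ᵥ G.mulVec y

/-- The hyperbolic plane `U`. -/
def UMat : Matrix (Fin 2) (Fin 2) ℤ := !![0, 1; 1, 0]

/-- The (negative definite) root lattice `A₁`. -/
def A1Mat : Matrix (Fin 1) (Fin 1) ℤ := !![-2]

/-- The (negative definite) root lattice `A₂`. -/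
def A2Mat : Matrix (Fin 2) (Fin 2) ℤ := !![-2, 1; 1, -2]

/-- The negative definite root lattice `E₈` (Bourbaki numbering). -/
def E8Mat : Matrix (Fin 8) (Fin 8) ℤ :=
  !![-2,0,1,0,0,0,0,0;
     0,-2,0,1,0,0,0,0;
     1,0,-2,1,0,0,0,0;
     0,1,1,-2,1,0,0,0;
     0,0,0,1,-2,1,0,0;
     0,0,0,0,1,-2,1,0;
     0,0,0,0,0,1,-2,1;
     0,0,0,0,0,0,1,-2]

/-- The negative definite root lattice `E₇` (first seven Bourbaki nodes of `E₈`). -/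
def E7Mat : Matrix (Fin 7) (Fin 7) ℤ :=
  E8Mat.submatrix (Fin.castLE (by norm_num)) (Fin.castLE (by norm_num))

/-- The negative definite root lattice `E₆` (first six Bourbaki nodes of `E₈`). -/
def E6Mat : Matrix (Fin 6) (Fin 6) ℤ :=
  E8Mat.submatrix (Fin.castLE (by norm_num)) (Fin.castLE (by norm_num))

/-- Orthogonal direct sum of Gram matrices. -/
def dsum {ι κ : Type*} (G : Matrix ι ι ℤ) (H : Matrix κ κ ℤ) :
    Matrix (ι ⊕ κ) (ι ⊕ κ) ℤ :=
  Matrix.fromBlocks G 0 0 H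

/-- Index type for the K3 lattice `U^{⊕3} ⊕ E₈^{⊕2}`. -/
abbrev K3Ix : Type := (Fin 2 ⊕ Fin 2 ⊕ Fin 2) ⊕ (Fin 8 ⊕ Fin 8)

/-- Gram matrix of the K3 lattice `U^{⊕3} ⊕ E₈^{⊕2}`. -/
def K3Mat : Matrix K3Ix K3Ix ℤ := dsum (dsum UMat (dsum UMat UMat)) (dsum E8Mat E8Mat)

/-- `f` is a primitive isometric embedding of the lattice with Gram matrix `G`
into the lattice with Gram matrix `H` (primitive: the image is closed under division). -/
def IsPrimEmb {ι κ : Type*} [Fintype ι] [Fintype κ] (G : Matrix ι ι ℤ) (H : Matrix κ κ ℤ)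
    (f : (ι → ℤ) →ₗ[ℤ] (κ → ℤ)) : Prop :=
  Function.Injective f ∧ (∀ x y, BF H (f x) (f y) = BF G x y) ∧
    ∀ (c : ℤ) (x : κ → ℤ), c ≠ 0 → c • x ∈ LinearMap.range f → x ∈ LinearMap.range f

/-- The orthogonal complement of a submodule with respect to the form given by `H`. -/
def orthComp {κ : Type*} [Fintype κ] (H : Matrix κ κ ℤ) (S : Submodule ℤ (κ → ℤ)) :
    Submodule ℤ (κ → ℤ) where
  carrier := {x | ∀ y ∈ S, BF H x y = 0}
  add_mem' := by
    intro a b ha hb y hy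
    have h1 := ha y hy
    have h2 := hb y hy
    simp only [BF, add_dotProduct] at *
    omega
  zero_mem' := by
    intro y hy
    simp [BF]
  smul_mem' := by
    intro c a ha y hy
    have h1 := ha y hy
    simp only [BF, smul_dotProduct] at *
    simp [h1]

/-- The two lattices given by Gram matrices `G`, `H` are isometric. -/
def IsomGram {ι κ : Type*} [Fintype ι] [Fintype κ] (G : Matrix ι ι ℤ) (H : Matrix κ κ ℤ) : Prop :=
  ∃ e : (ι → ℤ) ≃ₗ[ℤ] (κ → ℤ), ∀ x y, BF H (e x) (e y) = BF G x y

/-- The submodule `S` of the lattice with Gram matrix `H`, equipped with the restricted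
form, is isometric to the lattice with Gram matrix `G`. -/
def SubIsom {ι κ : Type*} [Fintype ι] [Fintype κ] (H : Matrix κ κ ℤ)
    (S : Submodule ℤ (κ → ℤ)) (G : Matrix ι ι ℤ) : Prop :=
  ∃ e : (ι → ℤ) ≃ₗ[ℤ] S, ∀ x y, BF H (e x : κ → ℤ) (e y : κ → ℤ) = BF G x y

/-- The lattice with Gram matrix `G` is even. -/
def EvenGram {ι : Type*} [Fintype ι] (G : Matrix ι ι ℤ) : Prop := ∀ x, 2 ∣ BF G x x

/-- The lattice with Gram matrix `G` has signature `(p, q)`. -/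
def SigIs {ι : Type*} [Fintype ι] [DecidableEq ι] (G : Matrix ι ι ℤ) (p q : ℕ) : Prop :=
  ∃ d : ι → ℝ, (∀ i, d i = 1 ∨ d i = -1) ∧ Nat.card {i // d i = 1} = p ∧
    Nat.card {i // d i = -1} = q ∧
    ∃ P : Matrix ι ι ℝ, IsUnit P.det ∧
      Pᵀ * (G.map (Int.cast : ℤ → ℝ)) * P = Matrix.diagonal d

/-- The discriminant group `A_L = L^*/L` of a lattice with Gram matrix `G`,
realized as the cokernel of `G`. -/
abbrev Coker {ι : Type*} [Fintype ι] [DecidableEq ι] (G : Matrix ι ι ℤ) :=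
  (ι → ℤ) ⧸ LinearMap.range (Matrix.toLin' G)

/-- The value `x᷉ᵀ G⁻¹ x` of the discriminant quadratic form at (the class of) `x`. -/
noncomputable def qval {ι : Type*} [Fintype ι] [DecidableEq ι] (G : Matrix ι ι ℤ) (x : ι → ℤ) : ℚ :=
  (fun i => (x i : ℚ)) ⬝ᵥ ((G.map (Int.cast : ℤ → ℚ))⁻¹).mulVec (fun i => (x i : ℚ))

/-- The discriminant form of `G` is isomorphic to minus the discriminant form of `H`. -/
def QIsoNeg {ι κ : Type*} [Fintype ι] [DecidableEq ι] [Fintype κ] [DecidableEq κ]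
    (G : Matrix ι ι ℤ) (H : Matrix κ κ ℤ) : Prop :=
  ∃ e : Coker G ≃+ Coker H, ∀ x : ι → ℤ, ∃ y : κ → ℤ,
    e (Submodule.Quotient.mk x) = Submodule.Quotient.mk y ∧
    qval G x + qval H y ∈ AddSubgroup.zmultiples (2 : ℚ)

/-- Inclusion of the first `U` summand into the K3 lattice. -/
def inU1 (x : Fin 2 → ℤ) : K3Ix → ℤ := Sum.elim (Sum.elim x 0) 0

/-- Inclusion of the first `E₈` summand into the K3 lattice. -/
def inE81 (x : Fin 8 → ℤ) : K3Ix → ℤ := Sum.elim 0 (Sum.elim x 0)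

/-- Inclusion of the second `E₈` summand into the K3 lattice. -/
def inE82 (x : Fin 8 → ℤ) : K3Ix → ℤ := Sum.elim 0 (Sum.elim 0 x)

/-!
In `E₈` the highest root `θ` is orthogonal to `α₁, …, α₇` and has product `-1` with `α₈`, so `θ`
and `-α₈` span a copy of `A₂`. Orthogonality to `θ` kills the `α₈`-coordinate, and then
orthogonality to `α₈` kills the `α₇`-coordinate: the complement is spanned by `α₁, …, α₆`, which
is `E₆`. The copy of `A₂` is primitive because the coefficients `2, 3` of `θ` at `α₁, α₂` are
coprime, which gives the embedding an integral left inverse.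
-/

open Function

section GramForm

variable {ι κ : Type*} [Fintype ι] [Fintype κ]

lemma BF_mulVecLin_of_gram_eq {G : Matrix ι ι ℤ} {H : Matrix κ κ ℤ} {M : Matrix κ ι ℤ}
    (h : Mᵀ * H * M = G) (x y : ι → ℤ) : BF H (mulVecLin M x) (mulVecLin M y) = BF G x y := by
  simp only [← h, BF, mulVecLin_apply, ← mulVec_mulVec, dotProduct_mulVec x Mᵀ, vecMul_transpose]

lemma mem_orthComp_range_mulVecLin (H : Matrix κ κ ℤ) (M : Matrix κ ι ℤ) (x : κ → ℤ) :
    x ∈ orthComp H (LinearMap.range (mulVecLin M)) ↔ x ᵥ* (H * M) = 0 := by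
  rw [← dotProduct_eq_zero_iff]
  change (∀ y ∈ LinearMap.range (mulVecLin M), BF H x y = 0) ↔ _
  simp only [LinearMap.mem_range, forall_exists_index, forall_apply_eq_imp_iff, mulVecLin_apply,
    BF, dotProduct_mulVec, vecMul_vecMul]

lemma leftInverse_mulVecLin_of_mul_eq_one [DecidableEq ι] {L : Matrix ι κ ℤ} {M : Matrix κ ι ℤ}
    (h : L * M = 1) :
    LeftInverse (mulVecLin L) (mulVecLin M) := fun a => by
  simp only [mulVecLin_apply, mulVec_mulVec, h, one_mulVec]

lemma isPrimEmb_of_leftInverse {G : Matrix ι ι ℤ} {H : Matrix κ κ ℤ}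
    {f : (ι → ℤ) →ₗ[ℤ] (κ → ℤ)} {g : (κ → ℤ) →ₗ[ℤ] (ι → ℤ)} (hgf : LeftInverse g f)
    (hf : ∀ x y, BF H (f x) (f y) = BF G x y) : IsPrimEmb G H f := by
  refine ⟨hgf.injective, hf, ?_⟩
  rintro c x hc ⟨a, hax⟩
  have ha : a = c • g x := by rw [← map_smul, ← hax, hgf]
  refine ⟨g x, smul_right_injective _ hc ?_⟩
  simp only [← map_smul, ← ha, hax]

lemma subIsom_of_range_eq {G : Matrix ι ι ℤ} {H : Matrix κ κ ℤ} {S : Submodule ℤ (κ → ℤ)}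
    {f : (ι → ℤ) →ₗ[ℤ] (κ → ℤ)} (hinj : Injective f) (hS : LinearMap.range f = S)
    (hf : ∀ x y, BF H (f x) (f y) = BF G x y) : SubIsom H S G :=
  ⟨(LinearEquiv.ofInjective f hinj).trans (LinearEquiv.ofEq _ _ hS), hf⟩

end GramForm

/-- The columns are the highest root `θ = (2,3,4,6,5,4,3,2)` and `-α₈`. -/
def A2toE8 : Matrix (Fin 8) (Fin 2) ℤ :=
  !![2, 0; 3, 0; 4, 0; 6, 0; 5, 0; 4, 0; 3, 0; 2, -1]

/-- Recovers the `A₂`-coordinates from the coordinates at `α₁`, `α₂`, `α₈` of the image. -/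
def E8toA2 : Matrix (Fin 2) (Fin 8) ℤ :=
  !![-1, 1, 0, 0, 0, 0, 0, 0; -2, 2, 0, 0, 0, 0, 0, -1]

def E6toE8 : Matrix (Fin 8) (Fin 6) ℤ :=
  (1 : Matrix (Fin 8) (Fin 8) ℤ).submatrix id (Fin.castLE (by norm_num))

lemma A2toE8_gram : A2toE8ᵀ * E8Mat * A2toE8 = A2Mat := by decide

lemma E8toA2_mul_A2toE8 : E8toA2 * A2toE8 = 1 := by decide

lemma E6toE8_gram : E6toE8ᵀ * E8Mat * E6toE8 = E6Mat := by decide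

lemma E6toE8_transpose_mul_self : E6toE8ᵀ * E6toE8 = 1 := by decide

lemma E8Mat_mul_A2toE8 :
    E8Mat * A2toE8 = !![0, 0; 0, 0; 0, 0; 0, 0; 0, 0; 0, 0; 0, -1; -1, 2] := by
  decide

lemma vecMul_E8Mat_mul_A2toE8 (x : Fin 8 → ℤ) :
    x ᵥ* (E8Mat * A2toE8) = ![-x 7, 2 * x 7 - x 6] := by
  rw [E8Mat_mul_A2toE8]
  ext i
  fin_cases i <;> simp [vecMul, dotProduct, Fin.sum_univ_succ]
  ring

lemma mem_orthComp_A2toE8 (x : Fin 8 → ℤ) :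
    x ∈ orthComp E8Mat (LinearMap.range (mulVecLin A2toE8)) ↔ x 6 = 0 ∧ x 7 = 0 := by
  rw [mem_orthComp_range_mulVecLin, vecMul_E8Mat_mul_A2toE8]
  simp only [funext_iff, Fin.forall_fin_two, Pi.zero_apply, cons_val_zero, cons_val_one]
  omega

lemma E6toE8_mulVec (a : Fin 6 → ℤ) :
    E6toE8 *ᵥ a = ![a 0, a 1, a 2, a 3, a 4, a 5, 0, 0] := by
  ext i
  fin_cases i <;> simp [E6toE8, mulVec, dotProduct, Fin.sum_univ_succ, one_apply]

lemma range_E6toE8 :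
    LinearMap.range (mulVecLin E6toE8) = orthComp E8Mat (LinearMap.range (mulVecLin A2toE8)) := by
  ext x
  rw [mem_orthComp_A2toE8]
  constructor
  · rintro ⟨a, rfl⟩
    simp [E6toE8_mulVec]
  · rintro ⟨h6, h7⟩
    refine ⟨![x 0, x 1, x 2, x 3, x 4, x 5], ?_⟩
    ext i
    fin_cases i <;> simp [E6toE8_mulVec, h6, h7]

/-- The root lattice `A₂` embeds primitively into `E₈` with orthogonal complement
isometric to `E₆`. -/
theorem stmt7 : ∃ f : (Fin 2 → ℤ) →ₗ[ℤ] (Fin 8 → ℤ),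
    IsPrimEmb A2Mat E8Mat f ∧
    SubIsom E8Mat (orthComp E8Mat (LinearMap.range f)) E6Mat :=
  ⟨mulVecLin A2toE8,
    isPrimEmb_of_leftInverse (leftInverse_mulVecLin_of_mul_eq_one E8toA2_mul_A2toE8)
      (BF_mulVecLin_of_gram_eq A2toE8_gram),
    subIsom_of_range_eq (leftInverse_mulVecLin_of_mul_eq_one E6toE8_transpose_mul_self).injective
      range_E6toE8 (BF_mulVecLin_of_gram_eq E6toE8_gram)⟩
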